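/- Performance difference lemma (discounted). For any two stationary policies π and π' in a discounted MDP and any initial probability vector ν on S: V^{π'}(ν) − V^{π}(ν) = (1/(1−γ)) · ∑_s d^{π'}_ν(s) ∑_a π'(a|s) · A^{π}(s,a). -/

import Mathlib

open Finset

/-- Iterates of the state distribution of a stationary policy `π` in a discounted MDP:
`ν^π_0 = ν` and `ν^π_{h+1}(s') = ∑_{s,a} ν^π_h(s) π(a|s) P(s'|s,a)`. -/
noncomputable def nuPol {S A : Type*} [Fintype S] [Fintype A]
    (P : S → A → S → ℝ) (π : S → A → ℝ) (ν : S → ℝ) : ℕ → S → ℝ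
  | 0 => ν
  | h + 1 => fun s' => ∑ s : S, ∑ a : A, nuPol P π ν h s * π s a * P s a s'

/-- Discounted occupancy `d^π_ν(s) = (1 − γ) ∑_{h=0}^∞ γ^h ν^π_h(s)`. -/
noncomputable def dDisc {S A : Type*} [Fintype S] [Fintype A] (γ : ℝ)
    (P : S → A → S → ℝ) (π : S → A → ℝ) (ν : S → ℝ) (s : S) : ℝ :=
  (1 - γ) * ∑' h : ℕ, γ ^ h * nuPol P π ν h s

/-- Value of a stationary policy from initial distribution `ν`:
`V^π(ν) = ∑_{h=0}^∞ γ^h ∑_{s,a} ν^π_h(s) π(a|s) R(s,a)`. -/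
noncomputable def Vdisc {S A : Type*} [Fintype S] [Fintype A] (γ : ℝ)
    (P : S → A → S → ℝ) (R : S → A → ℝ) (π : S → A → ℝ) (ν : S → ℝ) : ℝ :=
  ∑' h : ℕ, γ ^ h * ∑ s : S, ∑ a : A, nuPol P π ν h s * π s a * R s a

/-- Action value `Q^π(s,a) = R(s,a) + γ ∑_{s'} P(s'|s,a) V^π(δ_{s'})`. -/
noncomputable def Qdisc {S A : Type*} [Fintype S] [Fintype A] [DecidableEq S] (γ : ℝ)
    (P : S → A → S → ℝ) (R : S → A → ℝ) (π : S → A → ℝ) (s : S) (a : A) : ℝ :=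
  R s a + γ * ∑ s' : S, P s a s' * Vdisc γ P R π (fun t => if t = s' then 1 else 0)

/-- Advantage `A^π(s,a) = Q^π(s,a) − ∑_{a'} π(a'|s) Q^π(s,a')`. -/
noncomputable def Adisc {S A : Type*} [Fintype S] [Fintype A] [DecidableEq S] (γ : ℝ)
    (P : S → A → S → ℝ) (R : S → A → ℝ) (π : S → A → ℝ) (s : S) (a : A) : ℝ :=
  Qdisc γ P R π s a - ∑ a' : A, π s a' * Qdisc γ P R π s a'

/-- Maximum of a real-valued function over the finite nonempty type `A`. -/
noncomputable def maxA {A : Type*} [Fintype A] [Nonempty A] (g : A → ℝ) : ℝ :=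
  Finset.univ.sup' Finset.univ_nonempty g

section PDAux

variable {S A : Type*} [Fintype S] [Fintype A] [DecidableEq S]

/-- point mass -/
def deltaFun (s : S) : S → ℝ := fun t => if t = s then 1 else 0

/-- expected reward at step h -/
noncomputable def rStep (P : S → A → S → ℝ) (R : S → A → ℝ) (π : S → A → ℝ)
    (ν : S → ℝ) (h : ℕ) : ℝ :=
  ∑ s : S, ∑ a : A, nuPol P π ν h s * π s a * R s a

lemma Vdisc_eq_rStep (γ : ℝ) (P : S → A → S → ℝ) (R : S → A → ℝ) (π : S → A → ℝ)
    (ν : S → ℝ) : Vdisc γ P R π ν = ∑' h : ℕ, γ ^ h * rStep P R π ν h := rfl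

lemma nuPol_nonneg {P : S → A → S → ℝ} (hP0 : ∀ s a s', 0 ≤ P s a s')
    {π : S → A → ℝ} (hπ0 : ∀ s a, 0 ≤ π s a) {ν : S → ℝ} (hν0 : ∀ s, 0 ≤ ν s) :
    ∀ h s, 0 ≤ nuPol P π ν h s := by
  intro h
  induction h with
  | zero => exact hν0
  | succ h ih =>
    intro s'
    refine Finset.sum_nonneg fun s _ => Finset.sum_nonneg fun a _ => ?_
    exact mul_nonneg (mul_nonneg (ih s) (hπ0 s a)) (hP0 s a s')

lemma nuPol_sum {P : S → A → S → ℝ} (hP1 : ∀ s a, ∑ s' : S, P s a s' = 1)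
    {π : S → A → ℝ} (hπ1 : ∀ s, ∑ a : A, π s a = 1) {ν : S → ℝ}
    (hν1 : ∑ s : S, ν s = 1) : ∀ h, ∑ s : S, nuPol P π ν h s = 1 := by
  intro h
  induction h with
  | zero => exact hν1
  | succ h ih =>
    show ∑ s' : S, ∑ s : S, ∑ a : A, nuPol P π ν h s * π s a * P s a s' = 1
    rw [Finset.sum_comm]
    have : ∀ s : S, ∑ s' : S, ∑ a : A, nuPol P π ν h s * π s a * P s a s'
        = nuPol P π ν h s := by
      intro s
      rw [Finset.sum_comm]
      have hA : ∀ a : A, ∑ s' : S, nuPol P π ν h s * π s a * P s a s'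
          = nuPol P π ν h s * π s a := by
        intro a; rw [← Finset.mul_sum, hP1, mul_one]
      simp_rw [hA, ← Finset.mul_sum, hπ1, mul_one]
    simp_rw [this]
    exact ih

lemma nuPol_le_one {P : S → A → S → ℝ} (hP0 : ∀ s a s', 0 ≤ P s a s')
    (hP1 : ∀ s a, ∑ s' : S, P s a s' = 1)
    {π : S → A → ℝ} (hπ0 : ∀ s a, 0 ≤ π s a) (hπ1 : ∀ s, ∑ a : A, π s a = 1)
    {ν : S → ℝ} (hν0 : ∀ s, 0 ≤ ν s) (hν1 : ∑ s : S, ν s = 1)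
    (h : ℕ) (s : S) : nuPol P π ν h s ≤ 1 := by
  calc nuPol P π ν h s ≤ ∑ t : S, nuPol P π ν h t :=
        Finset.single_le_sum (fun t _ => nuPol_nonneg hP0 hπ0 hν0 h t) (Finset.mem_univ s)
    _ = 1 := nuPol_sum hP1 hπ1 hν1 h

lemma summable_geom_mul {γ : ℝ} (hγ0 : 0 ≤ γ) (hγ1 : γ < 1) {u : ℕ → ℝ} {C : ℝ}
    (hu : ∀ h, |u h| ≤ C) : Summable (fun h => γ ^ h * u h) := by
  refine Summable.of_norm_bounded
    ((summable_geometric_of_lt_one hγ0 hγ1).mul_left C) fun h => ?_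
  rw [Real.norm_eq_abs, abs_mul, abs_pow, abs_of_nonneg hγ0, mul_comm]
  exact mul_le_mul_of_nonneg_right (hu h) (pow_nonneg hγ0 h)

lemma deltaFun_nonneg (s t : S) : 0 ≤ deltaFun s t := by
  unfold deltaFun; split <;> norm_num

lemma deltaFun_sum (s : S) : ∑ t : S, deltaFun s t = 1 := by
  simp [deltaFun]

lemma rStep_abs_le_one {P : S → A → S → ℝ} (hP0 : ∀ s a s', 0 ≤ P s a s')
    (hP1 : ∀ s a, ∑ s' : S, P s a s' = 1)
    {R : S → A → ℝ} (hR : ∀ s a, R s a ∈ Set.Icc (0 : ℝ) 1)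
    {π : S → A → ℝ} (hπ0 : ∀ s a, 0 ≤ π s a) (hπ1 : ∀ s, ∑ a : A, π s a = 1)
    {ν : S → ℝ} (hν0 : ∀ s, 0 ≤ ν s) (hν1 : ∑ s : S, ν s = 1)
    (h : ℕ) : |rStep P R π ν h| ≤ 1 := by
  have h0 : 0 ≤ rStep P R π ν h := by
    refine Finset.sum_nonneg fun s _ => Finset.sum_nonneg fun a _ => ?_
    exact mul_nonneg (mul_nonneg (nuPol_nonneg hP0 hπ0 hν0 h s) (hπ0 s a)) (hR s a).1
  have h1 : rStep P R π ν h ≤ 1 := by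
    calc rStep P R π ν h ≤ ∑ s : S, ∑ a : A, nuPol P π ν h s * π s a := by
          refine Finset.sum_le_sum fun s _ => Finset.sum_le_sum fun a _ => ?_
          have hnn : 0 ≤ nuPol P π ν h s * π s a :=
            mul_nonneg (nuPol_nonneg hP0 hπ0 hν0 h s) (hπ0 s a)
          calc nuPol P π ν h s * π s a * R s a ≤ nuPol P π ν h s * π s a * 1 :=
                mul_le_mul_of_nonneg_left (hR s a).2 hnn
            _ = nuPol P π ν h s * π s a := mul_one _
      _ = 1 := by
          simp_rw [← Finset.mul_sum, hπ1, mul_one]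
          exact nuPol_sum hP1 hπ1 hν1 h
  rw [abs_le]; constructor <;> linarith

lemma nuPol_linear (P : S → A → S → ℝ) (π : S → A → ℝ) (ν : S → ℝ) :
    ∀ h s, nuPol P π ν h s = ∑ t : S, ν t * nuPol P π (deltaFun t) h s := by
  intro h
  induction h with
  | zero =>
    intro s
    show ν s = ∑ t : S, ν t * deltaFun t s
    simp [deltaFun]
  | succ h ih =>
    intro s'
    show ∑ s : S, ∑ a : A, nuPol P π ν h s * π s a * P s a s'
       = ∑ t : S, ν t * ∑ s : S, ∑ a : A, nuPol P π (deltaFun t) h s * π s a * P s a s'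
    calc ∑ s : S, ∑ a : A, nuPol P π ν h s * π s a * P s a s'
        = ∑ s : S, ∑ a : A, ∑ t : S, ν t * (nuPol P π (deltaFun t) h s * π s a * P s a s') := by
          refine Finset.sum_congr rfl fun s _ => Finset.sum_congr rfl fun a _ => ?_
          rw [ih s, Finset.sum_mul, Finset.sum_mul]
          exact Finset.sum_congr rfl fun t _ => by ring
      _ = ∑ s : S, ∑ t : S, ∑ a : A, ν t * (nuPol P π (deltaFun t) h s * π s a * P s a s') := by
          exact Finset.sum_congr rfl fun s _ => Finset.sum_comm
      _ = ∑ t : S, ∑ s : S, ∑ a : A, ν t * (nuPol P π (deltaFun t) h s * π s a * P s a s') :=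
          Finset.sum_comm
      _ = ∑ t : S, ν t * ∑ s : S, ∑ a : A, nuPol P π (deltaFun t) h s * π s a * P s a s' := by
          refine Finset.sum_congr rfl fun t _ => ?_
          rw [Finset.mul_sum]
          exact Finset.sum_congr rfl fun s _ => (Finset.mul_sum _ _ _).symm

lemma rStep_linear (P : S → A → S → ℝ) (R : S → A → ℝ) (π : S → A → ℝ) (ν : S → ℝ)
    (h : ℕ) : rStep P R π ν h = ∑ t : S, ν t * rStep P R π (deltaFun t) h := by
  unfold rStep
  calc ∑ s : S, ∑ a : A, nuPol P π ν h s * π s a * R s a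
      = ∑ s : S, ∑ a : A, ∑ t : S, ν t * (nuPol P π (deltaFun t) h s * π s a * R s a) := by
        refine Finset.sum_congr rfl fun s _ => Finset.sum_congr rfl fun a _ => ?_
        rw [nuPol_linear P π ν h s, Finset.sum_mul, Finset.sum_mul]
        exact Finset.sum_congr rfl fun t _ => by ring
    _ = ∑ s : S, ∑ t : S, ∑ a : A, ν t * (nuPol P π (deltaFun t) h s * π s a * R s a) :=
        Finset.sum_congr rfl fun s _ => Finset.sum_comm
    _ = ∑ t : S, ∑ s : S, ∑ a : A, ν t * (nuPol P π (deltaFun t) h s * π s a * R s a) :=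
        Finset.sum_comm
    _ = ∑ t : S, ν t * ∑ s : S, ∑ a : A, nuPol P π (deltaFun t) h s * π s a * R s a := by
        refine Finset.sum_congr rfl fun t _ => ?_
        rw [Finset.mul_sum]
        exact Finset.sum_congr rfl fun s _ => (Finset.mul_sum _ _ _).symm

lemma nuPol_shift (P : S → A → S → ℝ) (π : S → A → ℝ) (ν : S → ℝ) :
    ∀ h, nuPol P π ν (h + 1) = nuPol P π (nuPol P π ν 1) h := by
  intro h
  induction h with
  | zero => rfl
  | succ h ih =>
    funext s'
    show ∑ s : S, ∑ a : A, nuPol P π ν (h + 1) s * π s a * P s a s' = _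
    rw [ih]
    rfl

lemma rStep_shift (P : S → A → S → ℝ) (R : S → A → ℝ) (π : S → A → ℝ) (ν : S → ℝ)
    (h : ℕ) : rStep P R π ν (h + 1) = rStep P R π (nuPol P π ν 1) h := by
  unfold rStep
  rw [nuPol_shift]

lemma Vdisc_linear {γ : ℝ} (hγ0 : 0 ≤ γ) (hγ1 : γ < 1)
    {P : S → A → S → ℝ} (hP0 : ∀ s a s', 0 ≤ P s a s') (hP1 : ∀ s a, ∑ s' : S, P s a s' = 1)
    {R : S → A → ℝ} (hR : ∀ s a, R s a ∈ Set.Icc (0 : ℝ) 1)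
    {π : S → A → ℝ} (hπ0 : ∀ s a, 0 ≤ π s a) (hπ1 : ∀ s, ∑ a : A, π s a = 1)
    (ν : S → ℝ) :
    Vdisc γ P R π ν = ∑ t : S, ν t * Vdisc γ P R π (deltaFun t) := by
  rw [Vdisc_eq_rStep]
  have hsummand : ∀ t : S, Summable (fun h : ℕ => ν t * (γ ^ h * rStep P R π (deltaFun t) h)) := by
    intro t
    exact (summable_geom_mul hγ0 hγ1
      (rStep_abs_le_one hP0 hP1 hR hπ0 hπ1 (deltaFun_nonneg t) (deltaFun_sum t))).mul_left _
  calc (∑' h : ℕ, γ ^ h * rStep P R π ν h)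
      = ∑' h : ℕ, ∑ t : S, ν t * (γ ^ h * rStep P R π (deltaFun t) h) := by
        refine tsum_congr fun h => ?_
        rw [rStep_linear, Finset.mul_sum]
        exact Finset.sum_congr rfl fun t _ => by ring
    _ = ∑ t : S, ∑' h : ℕ, ν t * (γ ^ h * rStep P R π (deltaFun t) h) :=
        Summable.tsum_finsetSum fun t _ => hsummand t
    _ = ∑ t : S, ν t * Vdisc γ P R π (deltaFun t) := by
        refine Finset.sum_congr rfl fun t _ => ?_
        rw [tsum_mul_left, Vdisc_eq_rStep]

lemma Vdisc_rec {γ : ℝ} (hγ0 : 0 ≤ γ) (hγ1 : γ < 1)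
    {P : S → A → S → ℝ} (hP0 : ∀ s a s', 0 ≤ P s a s') (hP1 : ∀ s a, ∑ s' : S, P s a s' = 1)
    {R : S → A → ℝ} (hR : ∀ s a, R s a ∈ Set.Icc (0 : ℝ) 1)
    {π : S → A → ℝ} (hπ0 : ∀ s a, 0 ≤ π s a) (hπ1 : ∀ s, ∑ a : A, π s a = 1)
    {ν : S → ℝ} (hν0 : ∀ s, 0 ≤ ν s) (hν1 : ∑ s : S, ν s = 1) :
    Vdisc γ P R π ν = rStep P R π ν 0 + γ * Vdisc γ P R π (nuPol P π ν 1) := by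
  have hsum : Summable (fun h : ℕ => γ ^ h * rStep P R π ν h) :=
    summable_geom_mul hγ0 hγ1 (rStep_abs_le_one hP0 hP1 hR hπ0 hπ1 hν0 hν1)
  rw [Vdisc_eq_rStep, Summable.tsum_eq_zero_add hsum]
  simp only [pow_zero, one_mul]
  congr 1
  have : ∀ h : ℕ, γ ^ (h + 1) * rStep P R π ν (h + 1)
      = γ * (γ ^ h * rStep P R π (nuPol P π ν 1) h) := by
    intro h
    rw [rStep_shift, pow_succ]
    ring
  simp_rw [this]
  rw [tsum_mul_left, Vdisc_eq_rStep]

lemma rStep_zero_delta (P : S → A → S → ℝ) (R : S → A → ℝ) (π : S → A → ℝ) (s : S) :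
    rStep P R π (deltaFun s) 0 = ∑ a : A, π s a * R s a := by
  unfold rStep
  show ∑ u : S, ∑ a : A, deltaFun s u * π u a * R u a = _
  unfold deltaFun
  simp [ite_mul, Finset.sum_ite_eq']

lemma nuPol_one_delta (P : S → A → S → ℝ) (π : S → A → ℝ) (s t : S) :
    nuPol P π (deltaFun s) 1 t = ∑ a : A, π s a * P s a t := by
  show ∑ u : S, ∑ a : A, deltaFun s u * π u a * P u a t = _
  unfold deltaFun
  simp [ite_mul, Finset.sum_ite_eq']

lemma Qdisc_eq {γ : ℝ} (P : S → A → S → ℝ) (R : S → A → ℝ) (π : S → A → ℝ)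
    (s : S) (a : A) :
    Qdisc γ P R π s a = R s a + γ * ∑ t : S, P s a t * Vdisc γ P R π (deltaFun t) := rfl

lemma Vdisc_delta {γ : ℝ} (hγ0 : 0 ≤ γ) (hγ1 : γ < 1)
    {P : S → A → S → ℝ} (hP0 : ∀ s a s', 0 ≤ P s a s') (hP1 : ∀ s a, ∑ s' : S, P s a s' = 1)
    {R : S → A → ℝ} (hR : ∀ s a, R s a ∈ Set.Icc (0 : ℝ) 1)
    {π : S → A → ℝ} (hπ0 : ∀ s a, 0 ≤ π s a) (hπ1 : ∀ s, ∑ a : A, π s a = 1)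
    (s : S) :
    Vdisc γ P R π (deltaFun s) = ∑ a : A, π s a * Qdisc γ P R π s a := by
  rw [Vdisc_rec hγ0 hγ1 hP0 hP1 hR hπ0 hπ1 (deltaFun_nonneg s) (deltaFun_sum s),
    rStep_zero_delta,
    Vdisc_linear hγ0 hγ1 hP0 hP1 hR hπ0 hπ1 (nuPol P π (deltaFun s) 1)]
  simp_rw [nuPol_one_delta, Qdisc_eq]
  have key : γ * ∑ t : S, (∑ a : A, π s a * P s a t) * Vdisc γ P R π (deltaFun t)
      = ∑ a : A, π s a * (γ * ∑ t : S, P s a t * Vdisc γ P R π (deltaFun t)) := by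
    calc γ * ∑ t : S, (∑ a : A, π s a * P s a t) * Vdisc γ P R π (deltaFun t)
        = ∑ t : S, ∑ a : A, π s a * (γ * (P s a t * Vdisc γ P R π (deltaFun t))) := by
          rw [Finset.mul_sum]
          refine Finset.sum_congr rfl fun t _ => ?_
          rw [Finset.sum_mul, Finset.mul_sum]
          exact Finset.sum_congr rfl fun a _ => by ring
      _ = ∑ a : A, ∑ t : S, π s a * (γ * (P s a t * Vdisc γ P R π (deltaFun t))) :=
          Finset.sum_comm
      _ = ∑ a : A, π s a * (γ * ∑ t : S, P s a t * Vdisc γ P R π (deltaFun t)) := by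
          refine Finset.sum_congr rfl fun a _ => ?_
          simp_rw [← Finset.mul_sum]
  rw [key, ← Finset.sum_add_distrib]
  exact Finset.sum_congr rfl fun a _ => by ring

end PDAux

/-- Performance difference lemma (discounted): for stationary policies `π, π'` and any
initial probability vector `ν`,
`V^{π'}(ν) − V^{π}(ν) = (1/(1−γ)) ∑_s d^{π'}_ν(s) ∑_a π'(a|s) A^{π}(s,a)`. -/
theorem performance_difference_discounted
    {S A : Type*} [Fintype S] [Fintype A] [Nonempty S] [Nonempty A] [DecidableEq S]
    (γ : ℝ) (hγ0 : 0 ≤ γ) (hγ1 : γ < 1)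
    (P : S → A → S → ℝ) (hP0 : ∀ s a s', 0 ≤ P s a s') (hP1 : ∀ s a, ∑ s' : S, P s a s' = 1)
    (R : S → A → ℝ) (hR : ∀ s a, R s a ∈ Set.Icc (0 : ℝ) 1)
    (π π' : S → A → ℝ)
    (hπ0 : ∀ s a, 0 ≤ π s a) (hπ1 : ∀ s, ∑ a : A, π s a = 1)
    (hπ'0 : ∀ s a, 0 ≤ π' s a) (hπ'1 : ∀ s, ∑ a : A, π' s a = 1)
    (ν : S → ℝ) (hν0 : ∀ s, 0 ≤ ν s) (hν1 : ∑ s : S, ν s = 1) :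
    Vdisc γ P R π' ν - Vdisc γ P R π ν =
      (1 / (1 - γ)) * ∑ s : S, dDisc γ P π' ν s * ∑ a : A, π' s a * Adisc γ P R π s a := by
  -- abbreviations
  set Vδ : S → ℝ := fun s => Vdisc γ P R π (deltaFun s) with hVδ
  set w : S → ℝ := fun s => ∑ a : A, π' s a * Adisc γ P R π s a with hw
  set ν' : ℕ → S → ℝ := fun h => nuPol P π' ν h with hν'
  -- probability facts for ν'
  have hν'0 : ∀ h s, 0 ≤ ν' h s := fun h s => nuPol_nonneg hP0 hπ'0 hν0 h s
  have hν'1 : ∀ h, ∑ s : S, ν' h s = 1 := fun h => nuPol_sum hP1 hπ'1 hν1 h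
  have hν'le : ∀ h s, ν' h s ≤ 1 := fun h s => nuPol_le_one hP0 hP1 hπ'0 hπ'1 hν0 hν1 h s
  -- Bellman
  have hBell : ∀ s : S, Vδ s = ∑ a : A, π s a * Qdisc γ P R π s a :=
    fun s => Vdisc_delta hγ0 hγ1 hP0 hP1 hR hπ0 hπ1 s
  have hQ : ∀ s a, Qdisc γ P R π s a = R s a + γ * ∑ t : S, P s a t * Vδ t :=
    fun s a => Qdisc_eq P R π s a
  have hAdv : ∀ s a, Adisc γ P R π s a = Qdisc γ P R π s a - Vδ s := by
    intro s a
    rw [Adisc, ← hBell s]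
  have hw2 : ∀ s : S, w s = (∑ a : A, π' s a * Qdisc γ P R π s a) - Vδ s := by
    intro s
    rw [hw]
    simp_rw [hAdv, mul_sub]
    rw [Finset.sum_sub_distrib, ← Finset.sum_mul, hπ'1, one_mul]
  -- step functions
  set X : ℕ → ℝ := fun h => ∑ s : S, ν' h s * Vδ s with hX
  set c : ℕ → ℝ := fun h => ∑ s : S, ν' h s * w s with hc
  set g : ℕ → ℝ := fun h => γ ^ h * X h with hg
  -- key pointwise identity
  have hkey : ∀ h : ℕ, c h = rStep P R π' ν h + γ * X (h + 1) - X h := by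
    intro h
    have expand : ∀ s, ν' h s * ∑ a : A, π' s a * Qdisc γ P R π s a
        = ∑ a : A, (ν' h s * π' s a * R s a
            + ∑ t : S, γ * (ν' h s * π' s a * P s a t * Vδ t)) := by
      intro s
      rw [Finset.mul_sum]
      refine Finset.sum_congr rfl fun a _ => ?_
      rw [hQ s a]
      calc ν' h s * (π' s a * (R s a + γ * ∑ t : S, P s a t * Vδ t))
          = ν' h s * π' s a * R s a
              + ν' h s * π' s a * γ * ∑ t : S, P s a t * Vδ t := by ring
        _ = _ := by
            rw [Finset.mul_sum]
            congr 1
            exact Finset.sum_congr rfl fun t _ => by ring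
    have e2 : ∑ s : S, ν' h s * ∑ a : A, π' s a * Qdisc γ P R π s a
        = rStep P R π' ν h + γ * X (h + 1) := by
      simp_rw [expand, Finset.sum_add_distrib]
      congr 1
      have swap : ∑ s : S, ∑ a : A, ∑ t : S, γ * (ν' h s * π' s a * P s a t * Vδ t)
          = ∑ t : S, γ * ((∑ s : S, ∑ a : A, ν' h s * π' s a * P s a t) * Vδ t) := by
        calc ∑ s : S, ∑ a : A, ∑ t : S, γ * (ν' h s * π' s a * P s a t * Vδ t)
            = ∑ s : S, ∑ t : S, ∑ a : A, γ * (ν' h s * π' s a * P s a t * Vδ t) :=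
              Finset.sum_congr rfl fun s _ => Finset.sum_comm
          _ = ∑ t : S, ∑ s : S, ∑ a : A, γ * (ν' h s * π' s a * P s a t * Vδ t) :=
              Finset.sum_comm
          _ = ∑ t : S, γ * ((∑ s : S, ∑ a : A, ν' h s * π' s a * P s a t) * Vδ t) := by
              refine Finset.sum_congr rfl fun t _ => ?_
              rw [Finset.sum_mul, Finset.mul_sum]
              refine Finset.sum_congr rfl fun s _ => ?_
              rw [Finset.sum_mul, Finset.mul_sum]
      rw [swap]
      have hstep : ∀ t : S, ∑ s : S, ∑ a : A, ν' h s * π' s a * P s a t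
          = ν' (h + 1) t := fun t => rfl
      simp_rw [hstep]
      simp only [hX]
      rw [Finset.mul_sum]
    rw [hc]
    simp_rw [hw2, mul_sub]
    rw [Finset.sum_sub_distrib, e2]
  -- summability
  have hsum1 : Summable (fun h : ℕ => γ ^ h * rStep P R π' ν h) :=
    summable_geom_mul hγ0 hγ1 (rStep_abs_le_one hP0 hP1 hR hπ'0 hπ'1 hν0 hν1)
  have hcbnd : ∀ h, |c h| ≤ ∑ s : S, |w s| := by
    intro h
    calc |c h| ≤ ∑ s : S, |ν' h s * w s| := Finset.abs_sum_le_sum_abs _ _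
      _ ≤ ∑ s : S, |w s| := by
          refine Finset.sum_le_sum fun s _ => ?_
          rw [abs_mul, abs_of_nonneg (hν'0 h s)]
          calc ν' h s * |w s| ≤ 1 * |w s| :=
                mul_le_mul_of_nonneg_right (hν'le h s) (abs_nonneg _)
            _ = |w s| := one_mul _
  have hsum2 : Summable (fun h : ℕ => γ ^ h * c h) := summable_geom_mul hγ0 hγ1 hcbnd
  -- telescoping
  have hXbnd : ∀ h, |X h| ≤ ∑ s : S, |Vδ s| := by
    intro h
    calc |X h| ≤ ∑ s : S, |ν' h s * Vδ s| := Finset.abs_sum_le_sum_abs _ _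
      _ ≤ ∑ s : S, |Vδ s| := by
          refine Finset.sum_le_sum fun s _ => ?_
          rw [abs_mul, abs_of_nonneg (hν'0 h s)]
          calc ν' h s * |Vδ s| ≤ 1 * |Vδ s| :=
                mul_le_mul_of_nonneg_right (hν'le h s) (abs_nonneg _)
            _ = |Vδ s| := one_mul _
  have hg0 : Filter.Tendsto g Filter.atTop (nhds 0) := by
    apply squeeze_zero_norm (a := fun n => (∑ s : S, |Vδ s|) * γ ^ n)
    · intro n
      rw [hg, Real.norm_eq_abs, abs_mul, abs_pow, abs_of_nonneg hγ0, mul_comm]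
      exact mul_le_mul_of_nonneg_right (hXbnd n) (pow_nonneg hγ0 n)
    · simpa using (tendsto_pow_atTop_nhds_zero_of_lt_one hγ0 hγ1).const_mul
        (∑ s : S, |Vδ s|)
  have hdiff : ∀ h : ℕ, γ ^ h * rStep P R π' ν h - γ ^ h * c h = g h - g (h + 1) := by
    intro h
    rw [hkey h, hg]
    simp only
    rw [pow_succ]
    ring
  have htel : HasSum (fun h : ℕ => γ ^ h * rStep P R π' ν h - γ ^ h * c h) (g 0) := by
    rw [(hsum1.sub hsum2).hasSum_iff_tendsto_nat]
    have : ∀ n : ℕ, ∑ i ∈ Finset.range n, (γ ^ i * rStep P R π' ν i - γ ^ i * c i)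
        = g 0 - g n := by
      intro n
      simp_rw [hdiff]
      exact Finset.sum_range_sub' g n
    simp_rw [this]
    simpa using Filter.Tendsto.const_sub (g 0) hg0
  have htsub : Vdisc γ P R π' ν - ∑' h : ℕ, γ ^ h * c h = g 0 := by
    rw [Vdisc_eq_rStep, ← Summable.tsum_sub hsum1 hsum2]
    exact htel.tsum_eq
  have hg0val : g 0 = Vdisc γ P R π ν := by
    have : X 0 = ∑ t : S, ν t * Vδ t := rfl
    rw [hg]
    simp only [pow_zero, one_mul, this]
    exact (Vdisc_linear hγ0 hγ1 hP0 hP1 hR hπ0 hπ1 ν).symm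
  -- left side equals ∑' γ^h c h
  have hLHS : Vdisc γ P R π' ν - Vdisc γ P R π ν = ∑' h : ℕ, γ ^ h * c h := by
    rw [← hg0val, ← htsub]; ring
  -- right side equals ∑' γ^h c h
  have hsum3 : ∀ s : S, Summable (fun h : ℕ => γ ^ h * (ν' h s * w s)) := by
    intro s
    refine summable_geom_mul hγ0 hγ1 (C := |w s|) fun h => ?_
    rw [abs_mul, abs_of_nonneg (hν'0 h s)]
    calc ν' h s * |w s| ≤ 1 * |w s| :=
          mul_le_mul_of_nonneg_right (hν'le h s) (abs_nonneg _)
      _ = |w s| := one_mul _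
  have hRHS : (1 / (1 - γ)) * ∑ s : S, dDisc γ P π' ν s * w s
      = ∑' h : ℕ, γ ^ h * c h := by
    have h1γ : (1 : ℝ) - γ ≠ 0 := by linarith
    have hd : ∀ s : S, dDisc γ P π' ν s * w s
        = (1 - γ) * ∑' h : ℕ, γ ^ h * (ν' h s * w s) := by
      intro s
      rw [dDisc, mul_assoc]
      congr 1
      rw [← tsum_mul_right]
      exact tsum_congr fun h => by ring
    simp_rw [hd]
    rw [← Finset.mul_sum, ← mul_assoc, one_div, inv_mul_cancel₀ h1γ, one_mul]
    rw [← Summable.tsum_finsetSum fun s _ => hsum3 s]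
    refine tsum_congr fun h => ?_
    rw [hc, Finset.mul_sum]
  rw [hLHS, ← hRHS]
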